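/- Let ν be irrational, and let (c_j) be the sequence of denominators of the continued fraction convergents of ν. For each j let D_{c_j} = −s_j log s_j − (1−s_j) log(1−s_j) with s_j = c_j ν − ⌊c_j ν⌋ be the entropic chaos degree of the rotation R_ν with respect to the equi-partition of [0,2π) into c_j equal intervals. Then D_{c_j} → 0 as j → ∞. -/

import Mathlib

/-!
The convergent denominators `c_j` of an irrational `ν` tend to infinity while the numerators
`b_j` are integers, and `|c_j ν - b_j| ≤ 1 / c_{j+1}`; so `c_j ν` approaches the integers.
Binary entropy vanishes at both `0` and `1`, hence `binEnt ∘ Int.fract` is continuous and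
vanishes on the integers.
-/

open Real Filter

/-- The binary (Shannon) entropy `H(s) = −s log s − (1−s) log(1−s)` (natural log,
convention `0 · log 0 = 0`). -/
noncomputable def binEnt (s : ℝ) : ℝ :=
  -s * Real.log s - (1 - s) * Real.log (1 - s)

namespace GenContFract

open GenContFract (of)

variable {K : Type*} [Field K] [LinearOrder K] [FloorRing K] (v : K)

theorem of_contsAux_mem_bot (n : ℕ) :
    ((of v).contsAux n).a ∈ (⊥ : Subring K) ∧
      ((of v).contsAux n).b ∈ (⊥ : Subring K) := by
  induction n using Nat.twoStepInduction with
  | zero => simp [contsAux]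
  | one => simp [contsAux, of_h_eq_floor, intCast_mem]
  | more n ih₀ ih₁ =>
    rcases hs : (of v).s.get? n with _ | gp
    · rwa [contsAux_stable_step_of_terminated hs]
    · obtain ⟨ha, z, hb⟩ := of_partNum_eq_one_and_exists_int_partDen_eq hs
      have hz : gp.b ∈ (⊥ : Subring K) := hb ▸ intCast_mem _ z
      rw [contsAux_recurrence hs rfl rfl, ha]
      exact ⟨add_mem (mul_mem hz ih₁.1) (mul_mem (one_mem _) ih₀.1),
        add_mem (mul_mem hz ih₁.2) (mul_mem (one_mem _) ih₀.2)⟩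

theorem exists_int_eq_nth_num (n : ℕ) : ∃ z : ℤ, (of v).nums n = z := by
  simp_rw [eq_comm (a := (of v).nums n), ← Subring.mem_bot, num_eq_conts_a,
    nth_cont_eq_succ_nth_contAux]
  exact (of_contsAux_mem_bot v (n + 1)).1

variable {v} [IsStrictOrderedRing K]

theorem of_den_pos {n : ℕ} (h : ¬(of v).TerminatedAt n) : 0 < (of v).dens n :=
  lt_of_lt_of_le (mod_cast Nat.fib_pos.2 n.succ_pos)
    (succ_nth_fib_le_of_nth_den (Or.inr (mt (terminated_stable (n.sub_le 1)) h)))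

theorem abs_den_mul_sub_num_le {n : ℕ} (h : ¬(of v).TerminatedAt n) :
    |(of v).dens n * v - (of v).nums n| ≤ 1 / (of v).dens (n + 1) := by
  have hd := of_den_pos h
  calc |(of v).dens n * v - (of v).nums n| = (of v).dens n * |v - (of v).convs n| := by
        rw [conv_eq_num_div_den, ← abs_of_pos hd, ← abs_mul, abs_of_pos hd, mul_sub,
          mul_div_cancel₀ _ hd.ne']
    _ ≤ (of v).dens n * (1 / ((of v).dens n * (of v).dens (n + 1))) := by
        gcongr; exact abs_sub_convs_le h
    _ = 1 / (of v).dens (n + 1) := by field_simp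

variable {ν : ℝ}

theorem not_terminatedAt_of_irrational (hν : Irrational ν) (n : ℕ) : ¬(of ν).TerminatedAt n :=
  fun h => hν <| by
    obtain ⟨q, hq⟩ := (terminates_iff_rat ν).1 ⟨n, h⟩
    exact ⟨q, hq.symm⟩

theorem tendsto_of_den_succ_atTop_of_irrational (hν : Irrational ν) :
    Tendsto (fun n => (of ν).dens (n + 1)) atTop atTop :=
  tendsto_atTop_mono
    (fun _ => succ_nth_fib_le_of_nth_den (Or.inr (not_terminatedAt_of_irrational hν _)))
    (tendsto_natCast_atTop_atTop.comp Nat.fib_add_two_strictMono.tendsto_atTop)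

theorem tendsto_of_den_mul_sub_num_of_irrational (hν : Irrational ν) :
    Tendsto (fun n => (of ν).dens n * ν - (of ν).nums n) atTop (nhds 0) := by
  have hinv := (tendsto_of_den_succ_atTop_of_irrational hν).inv_tendsto_atTop
  simp only [← one_div] at hinv
  exact squeeze_zero_norm
    (fun n => abs_den_mul_sub_num_le (not_terminatedAt_of_irrational hν n)) hinv

end GenContFract

@[simp]
theorem binEnt_zero : binEnt 0 = 0 := by simp [binEnt]

@[simp]
theorem binEnt_one : binEnt 1 = 0 := by simp [binEnt]

theorem binEnt_eq_negMulLog_add (s : ℝ) : binEnt s = negMulLog s + negMulLog (1 - s) := by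
  simp only [binEnt, negMulLog]
  ring

theorem continuous_binEnt_comp_fract : Continuous (binEnt ∘ Int.fract) := by
  refine ContinuousOn.comp_fract'' (Continuous.continuousOn ?_) (by simp)
  simp only [funext binEnt_eq_negMulLog_add]
  fun_prop

/-- Limiting statement in the proof of Proposition 4.1: for irrational `ν`, along the
sequence `c_j` of denominators of the continued fraction convergents of `ν`, the entropic
chaos degree `D_{c_j} = H(c_j ν − ⌊c_j ν⌋)` of the rotation `R_ν` with respect to the
equi-partition of `[0,2π)` into `c_j` equal intervals tends to `0`. -/
theorem ecd_along_convergent_denominators_tendsto_zero (ν : ℝ) (hν : Irrational ν) :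
    Tendsto (fun j => binEnt (Int.fract ((GenContFract.of ν).dens j * ν)))
      atTop (nhds 0) := by
  have hlim := (continuous_binEnt_comp_fract.tendsto 0).comp
    (GenContFract.tendsto_of_den_mul_sub_num_of_irrational hν)
  rw [Function.comp_apply, Int.fract_zero, binEnt_zero] at hlim
  refine hlim.congr fun n => ?_
  obtain ⟨z, hz⟩ := GenContFract.exists_int_eq_nth_num ν n
  simp only [Function.comp_apply, hz, Int.fract_sub_intCast]
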